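/- arXiv:1609.08353 — 2 statements merged into one kernel-verified Lean document; each statement's English description precedes it below -/
import Mathlib

section
/- For n, k ≥ 1, B_{n,k} = Σ_{j≥1} [ binomial(2n, (n+1) − j(k+1)) − 2·binomial(2n, n − j(k+1)) + binomial(2n, (n−1) − j(k+1)) ], where binomial coefficients with negative lower index are zero. -/
open Finset Real Filter

/-- A Dyck-path sequence `a_1, …, a_{2n}` (with `a 0 = 0` and zero padding
beyond index `2n` so that the set of such functions is finite):
`a 1 = 1`, `a (2n) = 0`, and consecutive values differ by exactly 1. -/
def IsDyckSeq (n : ℕ) (a : ℕ → ℕ) : Prop :=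
  a 1 = 1 ∧ a (2*n) = 0 ∧
  (∀ i, 1 ≤ i → i < 2*n → (a (i+1) = a i + 1 ∨ a i = a (i+1) + 1)) ∧
  a 0 = 0 ∧ ∀ i, 2*n < i → a i = 0

/-- `A n t`: number of Dyck-path sequences of semilength `n` of height at most `t`,
with the convention `A 0 t = 1`. -/
noncomputable def A (n t : ℕ) : ℕ :=
  if n = 0 then 1
  else Nat.card {a : ℕ → ℕ // IsDyckSeq n a ∧ ∀ i, a i ≤ t}

/-- `B n k`: number of Dyck-path sequences of semilength `n` of height at least `k`,
with the conventions `B 0 0 = 1`, `B 0 k = 0` for `k ≥ 1`. -/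
noncomputable def B (n k : ℕ) : ℕ :=
  if n = 0 then (if k = 0 then 1 else 0)
  else Nat.card {a : ℕ → ℕ // IsDyckSeq n a ∧ ∃ i, k ≤ a i}

/-- The `n`-th Catalan number `C_n = (1/(n+1)) * binomial(2n, n)`. -/
def C (n : ℕ) : ℕ := (2*n).choose n / (n + 1)

/-- Binomial coefficient with integer lower index, zero when negative. -/
def chooseZ (m : ℕ) (r : ℤ) : ℕ := if 0 ≤ r then m.choose r.toNat else 0

/-!
A Dyck path of height at least `k = t + 1` is a Dyck path that leaves the strip `[0, t]`, so
`B n k` is the number of all Dyck paths minus those confined to that strip. The number `N_L(x)` of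
walks of length `L` from `0` to `x` inside the strip satisfies `N_{L+1}(x) = N_L(x-1) + N_L(x+1)`
with `N_L(-1) = N_L(t+1) = 0`. By the method of images so does the alternating sum of free walk
counts `∑_j (W_L(x + 2j(t+2)) - W_L(-2 - x + 2j(t+2)))`, which has the same values at `L = 0`,
hence the two agree. Since
`W_{2n}(2c) = binomial(2n, n - c)`, pairing the images of index `j` and `-j` at `x = 0` produces
the second differences of binomial coefficients in the statement.
-/

open Function

lemma chooseZ_succ (m : ℕ) (r : ℤ) : chooseZ (m + 1) r = chooseZ m (r - 1) + chooseZ m r := by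
  rcases lt_trichotomy r 0 with h | rfl | h
  · simp only [chooseZ, if_neg h.not_ge, if_neg (show ¬ (0 : ℤ) ≤ r - 1 by omega)]
  · simp [chooseZ]
  · obtain ⟨s, rfl⟩ : ∃ s : ℕ, r = s + 1 := ⟨(r - 1).toNat, by omega⟩
    simp only [chooseZ, add_sub_cancel_right, Nat.cast_nonneg, if_true,
      show (0 : ℤ) ≤ s + 1 by omega, Int.toNat_natCast]
    rw [show ((s : ℤ) + 1).toNat = s + 1 by omega, Nat.choose_succ_succ']

def walkCount : ℕ → ℤ → ℤ
  | 0, x => if x = 0 then 1 else 0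
  | L + 1, x => walkCount L (x - 1) + walkCount L (x + 1)

lemma walkCount_eq_zero {L : ℕ} {x : ℤ} (h : (L : ℤ) < |x|) : walkCount L x = 0 := by
  induction L generalizing x with
  | zero => simp_all [walkCount]
  | succ L ih =>
    rw [lt_abs] at h
    push_cast at h
    rw [walkCount, ih (lt_abs.2 (by omega)), ih (lt_abs.2 (by omega)), add_zero]

lemma walkCount_hasFiniteSupport (L : ℕ) : (walkCount L).HasFiniteSupport :=
  (Set.finite_Icc (-(L : ℤ)) L).subset fun x hx => by
    by_contra h
    rw [Set.mem_Icc] at h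
    exact hx (walkCount_eq_zero (lt_abs.2 (by omega)))

lemma walkCount_neg (L : ℕ) (x : ℤ) : walkCount L (-x) = walkCount L x := by
  induction L generalizing x with
  | zero => simp [walkCount]
  | succ L ih =>
    rw [walkCount, walkCount, show -x - 1 = -(x + 1) by ring, show -x + 1 = -(x - 1) by ring,
      ih, ih, add_comm]

lemma walkCount_two_mul_sub (L : ℕ) (r : ℤ) : walkCount L (2 * r - L) = chooseZ L r := by
  induction L generalizing r with
  | zero =>
    rcases lt_trichotomy r 0 with h | rfl | h
    · simp [walkCount, chooseZ, h.ne, h.not_ge]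
    · simp [walkCount, chooseZ]
    · simp [walkCount, chooseZ, h.ne', h.le,
        Nat.choose_eq_zero_of_lt (show 0 < r.toNat by omega)]
  | succ L ih =>
    rw [walkCount, chooseZ_succ]
    push_cast
    rw [← ih, ← ih]
    congr 2 <;> ring

lemma walkCount_two_mul (n : ℕ) (c : ℤ) :
    walkCount (2 * n) (2 * c) = chooseZ (2 * n) (n - c) := by
  rw [← walkCount_neg, ← walkCount_two_mul_sub]
  push_cast
  ring_nf

section Periodize

variable {M : Type*} [AddCommGroup M]

noncomputable def periodize (p : ℤ) (f : ℤ → M) (x : ℤ) : M := ∑ᶠ j : ℤ, f (x + j * p)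

lemma periodize_add_period (p : ℤ) (f : ℤ → M) (x : ℤ) :
    periodize p f (x + p) = periodize p f x := by
  rw [periodize, periodize]
  conv_rhs => rw [← finsum_comp_equiv (Equiv.addRight 1)]
  exact finsum_congr fun j => by simp only [Equiv.coe_addRight]; ring_nf

lemma periodize_reflect (p c : ℤ) {f : ℤ → M} (hf : ∀ y, f (c - y) = -f y) (x : ℤ) :
    periodize p f (c - x) = -periodize p f x := by
  rw [periodize, periodize, ← finsum_neg_distrib, ← finsum_comp_equiv (Equiv.neg ℤ)]
  exact finsum_congr fun j => by rw [← hf]; simp only [Equiv.neg_apply]; ring_nf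

lemma Function.HasFiniteSupport.comp_affine {f : ℤ → M} (hf : f.HasFiniteSupport) {p : ℤ}
    (hp : p ≠ 0) (x : ℤ) : (fun j : ℤ => f (x + j * p)).HasFiniteSupport :=
  Set.Finite.preimage ((add_right_injective x).comp (mul_left_injective₀ hp)).injOn hf

lemma periodize_neighbour_sum {f : ℤ → M} (hf : f.HasFiniteSupport) {p : ℤ} (hp : p ≠ 0)
    (x : ℤ) : periodize p (fun y => f (y - 1) + f (y + 1)) x
      = periodize p f (x - 1) + periodize p f (x + 1) := by
  rw [periodize, periodize, periodize,
    ← finsum_add_distrib (hf.comp_affine hp _) (hf.comp_affine hp _)]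
  exact finsum_congr fun j => by ring_nf

lemma sum_Icc_neg_natCast_eq (g : ℤ → M) (N : ℕ) :
    ∑ j ∈ Finset.Icc (-(N : ℤ)) N, g j = g 0 + ∑ j ∈ Finset.Icc 1 N, (g j + g (-j)) := by
  induction N with
  | zero => simp
  | succ N ih =>
    rw [Finset.sum_Icc_succ_top (by omega), ← add_assoc, ← ih,
      show Finset.Icc (-((N + 1 : ℕ) : ℤ)) (N + 1 : ℕ)
        = insert ((N : ℤ) + 1) (insert (-((N : ℤ) + 1)) (Finset.Icc (-(N : ℤ)) N)) by
          ext; simp only [Finset.mem_insert, Finset.mem_Icc]; push_cast; omega,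
      Finset.sum_insert (by simp only [Finset.mem_insert, Finset.mem_Icc]; omega),
      Finset.sum_insert (by simp)]
    push_cast
    abel

lemma finsum_int_eq_add_sum_Icc {g : ℤ → M} {N : ℕ}
    (hg : support g ⊆ Set.Icc (-(N : ℤ)) N) :
    ∑ᶠ j, g j = g 0 + ∑ j ∈ Finset.Icc 1 N, (g j + g (-j)) := by
  rw [finsum_eq_sum_of_support_subset g (s := Finset.Icc (-(N : ℤ)) N) (by simpa using hg),
    sum_Icc_neg_natCast_eq]

end Periodize

/-- By the reflection principle, the number of walks of length `L` from `0` to `y` that never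
visit `-1`. -/
def reflectedWalkCount (L : ℕ) (y : ℤ) : ℤ := walkCount L y - walkCount L (-2 - y)

lemma reflectedWalkCount_succ (L : ℕ) (y : ℤ) :
    reflectedWalkCount (L + 1) y
      = reflectedWalkCount L (y - 1) + reflectedWalkCount L (y + 1) := by
  simp only [reflectedWalkCount, walkCount]
  ring_nf

lemma reflectedWalkCount_reflect (L : ℕ) (y : ℤ) :
    reflectedWalkCount L (-2 - y) = -reflectedWalkCount L y := by
  simp [reflectedWalkCount]

lemma reflectedWalkCount_hasFiniteSupport (L : ℕ) : (reflectedWalkCount L).HasFiniteSupport :=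
  ((walkCount_hasFiniteSupport L).union
    ((walkCount_hasFiniteSupport L).comp_affine (p := -1) (by norm_num) (-2))).subset
    fun y hy => by
      contrapose! hy
      simp_all [reflectedWalkCount, sub_eq_add_neg]

lemma reflectedWalkCount_add_neg (n : ℕ) (c : ℤ) :
    reflectedWalkCount (2 * n) (2 * c) + reflectedWalkCount (2 * n) (-(2 * c))
      = 2 * (chooseZ (2 * n) (n - c) : ℤ) - chooseZ (2 * n) (n - 1 - c)
        - chooseZ (2 * n) (n + 1 - c) := by
  rw [reflectedWalkCount, reflectedWalkCount, show -2 - 2 * c = -(2 * (c + 1)) by ring,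
    show -2 - -(2 * c) = 2 * (c - 1) by ring, walkCount_neg, walkCount_neg, walkCount_two_mul,
    walkCount_two_mul, walkCount_two_mul, show (n : ℤ) - (c + 1) = n - 1 - c by ring,
    show (n : ℤ) - (c - 1) = n + 1 - c by ring]
  ring

lemma abs_le_abs_mul_of_ne_zero {j : ℤ} (hj : j ≠ 0) (p : ℤ) : |p| ≤ |j * p| := by
  rw [abs_mul]
  exact le_mul_of_one_le_left (abs_nonneg p) (Int.one_le_abs hj)

/-- The reflections in `-1` and `t + 1` generate the translations by `2 * (t + 2)`. -/
noncomputable def stripWalkCount (t L : ℕ) : ℤ → ℤ :=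
  periodize (2 * (t + 2)) (reflectedWalkCount L)

lemma stripWalkCount_neg_one (t L : ℕ) : stripWalkCount t L (-1) = 0 := by
  have h := periodize_reflect (2 * (t + 2)) (-2) (reflectedWalkCount_reflect L) (-1)
  norm_num at h
  rw [stripWalkCount]
  linarith

lemma stripWalkCount_top (t L : ℕ) : stripWalkCount t L (t + 1) = 0 := by
  -- `t + 1` and its mirror image `-2 - (t + 1)` differ by one period
  have h₁ := periodize_reflect (2 * (t + 2)) (-2) (reflectedWalkCount_reflect L) (t + 1)
  have h₂ := periodize_add_period (2 * (t + 2)) (reflectedWalkCount L) (-2 - (t + 1))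
  rw [show -2 - ((t : ℤ) + 1) + 2 * (t + 2) = t + 1 by ring] at h₂
  rw [stripWalkCount]
  linarith

lemma stripWalkCount_succ (t L : ℕ) (x : ℤ) :
    stripWalkCount t (L + 1) x = stripWalkCount t L (x - 1) + stripWalkCount t L (x + 1) := by
  rw [stripWalkCount, stripWalkCount,
    ← periodize_neighbour_sum (reflectedWalkCount_hasFiniteSupport L) (by positivity)]
  exact congrArg (periodize _ · x) (funext (reflectedWalkCount_succ L))

lemma stripWalkCount_zero {t : ℕ} {x : ℤ} (hx₀ : 0 ≤ x) (hxt : x ≤ t) :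
    stripWalkCount t 0 x = if x = 0 then 1 else 0 := by
  rw [stripWalkCount, periodize, finsum_eq_single _ 0]
  · simp [reflectedWalkCount, walkCount, show -2 - x ≠ 0 by omega]
  · intro j hj
    have := abs_le_abs_mul_of_ne_zero hj (2 * (t + 2))
    rw [abs_of_pos (by positivity), le_abs] at this
    rw [reflectedWalkCount, walkCount, walkCount, if_neg (by omega), if_neg (by omega), sub_zero]

lemma stripWalkCount_apply_zero_of_le {t L : ℕ} (hL : L ≤ 2 * t + 1) :
    stripWalkCount t L 0 = reflectedWalkCount L 0 := by
  rw [stripWalkCount, periodize, finsum_eq_single _ 0]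
  · simp
  · intro j hj
    have := abs_le_abs_mul_of_ne_zero hj (2 * (t + 2))
    rw [abs_of_pos (by positivity), le_abs] at this
    rw [reflectedWalkCount, walkCount_eq_zero, walkCount_eq_zero, sub_zero] <;> rw [lt_abs] <;>
      omega

def IsPaddedWalk (L : ℕ) (a : ℕ → ℕ) : Prop :=
  a 0 = 0 ∧ (∀ i < L, a (i + 1) = a i + 1 ∨ a i = a (i + 1) + 1) ∧ ∀ i, L < i → a i = 0

namespace IsPaddedWalk

variable {L : ℕ} {a : ℕ → ℕ}

lemma le_self (h : IsPaddedWalk L a) (i : ℕ) : a i ≤ i := by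
  induction i with
  | zero => exact h.1.le
  | succ i ih =>
    rcases lt_or_ge i L with hi | hi
    · rcases h.2.1 i hi with h' | h' <;> omega
    · rw [h.2.2 (i + 1) (by omega)]
      omega

lemma le_length (h : IsPaddedWalk L a) (i : ℕ) : a i ≤ L := by
  rcases le_or_gt i L with hi | hi
  · exact (h.le_self i).trans hi
  · rw [h.2.2 i hi]
    exact L.zero_le

lemma truncate (h : IsPaddedWalk (L + 1) a) : IsPaddedWalk L (update a (L + 1) 0) := by
  obtain ⟨h₀, hstep, hzero⟩ := h
  refine ⟨by simpa using h₀, fun i hi => ?_, fun i hi => ?_⟩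
  · simpa [update_apply, show i ≠ L + 1 by omega, show i ≠ L by omega] using hstep i (by omega)
  · rcases eq_or_ne i (L + 1) with rfl | hi'
    · simp
    · simpa [update_apply, hi'] using hzero i (by omega)

lemma extend (h : IsPaddedWalk L a) {v : ℕ} (hv : v = a L + 1 ∨ a L = v + 1) :
    IsPaddedWalk (L + 1) (update a (L + 1) v) := by
  obtain ⟨h₀, hstep, hzero⟩ := h
  refine ⟨by simpa using h₀, fun i hi => ?_, fun i hi => ?_⟩
  · rcases lt_or_eq_of_le (Nat.le_of_lt_succ hi) with hi | rfl
    · simpa [update_apply, show i ≠ L + 1 by omega, show i ≠ L by omega] using hstep i hi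
    · simpa using hv
  · simpa [update_apply, show i ≠ L + 1 by omega] using hzero i (by omega)

end IsPaddedWalk

/-- The endpoint is an integer so that `boundedWalks t L (x - 1)` is simply empty when `x = 0`. -/
def boundedWalks (t L : ℕ) (x : ℤ) : Set (ℕ → ℕ) :=
  {a | IsPaddedWalk L a ∧ (a L : ℤ) = x ∧ ∀ i, a i ≤ t}

lemma boundedWalks_finite (t L : ℕ) (x : ℤ) : (boundedWalks t L x).Finite := by
  refine (Set.finite_range fun g : Fin (L + 1) → Fin (t + 1) =>
    fun i => if h : i < L + 1 then (g ⟨i, h⟩ : ℕ) else 0).subset ?_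
  rintro a ⟨⟨-, -, hzero⟩, -, hle⟩
  refine ⟨fun i => ⟨a i, Nat.lt_succ_of_le (hle i)⟩, funext fun i => ?_⟩
  dsimp only
  split_ifs with h
  · rfl
  · exact (hzero i (by omega)).symm

lemma boundedWalks_eq_empty {t L : ℕ} {x : ℤ} (hx : x < 0 ∨ t < x) :
    boundedWalks t L x = ∅ := by
  refine Set.eq_empty_of_forall_notMem fun a ⟨_, hx', hle⟩ => ?_
  have := hle L
  omega

lemma ncard_boundedWalks_zero (t : ℕ) (x : ℤ) :
    (boundedWalks t 0 x).ncard = if x = 0 then 1 else 0 := by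
  have hsub : boundedWalks t 0 x ⊆ {0} := fun a ⟨⟨h₀, _, hzero⟩, _⟩ =>
    funext fun i => by rcases i with - | i <;> simp [h₀, hzero]
  split_ifs with hx
  · refine Set.ncard_eq_one.2 ⟨0, (hsub.antisymm fun a ha => ?_)⟩
    rw [Set.mem_singleton_iff.1 ha]
    exact ⟨⟨rfl, by simp, fun _ _ => rfl⟩, by simp [hx], fun _ => t.zero_le⟩
  · refine (Set.ncard_eq_zero (boundedWalks_finite ..)).2
      (Set.eq_empty_of_forall_notMem fun a ha => hx ?_)
    rw [← ha.2.1, Set.mem_singleton_iff.1 (hsub ha)]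
    rfl

lemma ncard_boundedWalks_succ {t L : ℕ} {x : ℤ} (hx₀ : 0 ≤ x) (hxt : x ≤ t) :
    (boundedWalks t (L + 1) x).ncard
      = (boundedWalks t L (x - 1)).ncard + (boundedWalks t L (x + 1)).ncard := by
  have hdisj : Disjoint (boundedWalks t L (x - 1)) (boundedWalks t L (x + 1)) :=
    Set.disjoint_left.2 fun a ha hb => by have := ha.2.1; have := hb.2.1; omega
  rw [← Set.ncard_union_eq hdisj (boundedWalks_finite ..) (boundedWalks_finite ..)]
  refine Set.ncard_congr (fun a _ => update a (L + 1) 0) ?_ ?_ ?_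
  · rintro a ⟨hw, hx, hle⟩
    have hb : ∀ i, update a (L + 1) 0 i ≤ t := fun i => by
      rw [update_apply]; split_ifs <;> simp [hle]
    rcases hw.2.1 L (by omega) with h | h
    · exact Or.inl ⟨hw.truncate, by rw [update_of_ne (by omega)]; omega, hb⟩
    · exact Or.inr ⟨hw.truncate, by rw [update_of_ne (by omega)]; omega, hb⟩
  · intro a b ha hb hab
    calc a = update (update a (L + 1) 0) (L + 1) (a (L + 1)) := by
          rw [update_idem, update_eq_self]
      _ = update (update b (L + 1) 0) (L + 1) (b (L + 1)) := by
        rw [hab, show a (L + 1) = b (L + 1) by have := ha.2.1.trans hb.2.1.symm; omega]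
      _ = b := by rw [update_idem, update_eq_self]
  · intro b hb
    have hw : IsPaddedWalk L b := by rcases hb with hb | hb <;> exact hb.1
    have hle : ∀ i, b i ≤ t := by rcases hb with hb | hb <;> exact hb.2.2
    have hbL : (b L : ℤ) = x - 1 ∨ (b L : ℤ) = x + 1 := by
      rcases hb with hb | hb <;> simp [hb.2.1]
    refine ⟨update b (L + 1) x.toNat,
      ⟨hw.extend (by omega), by rw [update_self]; omega, fun i => ?_⟩, ?_⟩
    · rw [update_apply]
      split_ifs <;> [omega; exact hle i]
    · rw [update_idem, update_eq_self_iff, hw.2.2 (L + 1) (by omega)]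

theorem ncard_boundedWalks_eq_stripWalkCount (t L : ℕ) {x : ℤ} (hx₀ : 0 ≤ x)
    (hxt : x ≤ t) :
    ((boundedWalks t L x).ncard : ℤ) = stripWalkCount t L x := by
  induction L generalizing x with
  | zero =>
    rw [ncard_boundedWalks_zero, stripWalkCount_zero hx₀ hxt]
    split_ifs <;> rfl
  | succ L ih =>
    have ih' : ∀ y : ℤ, -1 ≤ y → y ≤ t + 1 →
        ((boundedWalks t L y).ncard : ℤ) = stripWalkCount t L y := by
      intro y hy₁ hy₂
      obtain rfl | rfl | ⟨hy₀, hyt⟩ : y = -1 ∨ y = t + 1 ∨ (0 ≤ y ∧ y ≤ t) := by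
        omega
      · simp [boundedWalks_eq_empty, stripWalkCount_neg_one]
      · simp [boundedWalks_eq_empty, stripWalkCount_top]
      · exact ih hy₀ hyt
    rw [ncard_boundedWalks_succ hx₀ hxt, stripWalkCount_succ, Nat.cast_add,
      ih' _ (by omega) (by omega), ih' _ (by omega) (by omega)]

lemma isDyckSeq_iff {n : ℕ} (hn : 1 ≤ n) {a : ℕ → ℕ} :
    IsDyckSeq n a ↔ IsPaddedWalk (2 * n) a ∧ a (2 * n) = 0 := by
  constructor
  · rintro ⟨h₁, h₂, hstep, h₀, hzero⟩
    refine ⟨⟨h₀, fun i hi => ?_, hzero⟩, h₂⟩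
    rcases i with - | i
    · simp [h₀, h₁]
    · exact hstep (i + 1) (by omega) hi
  · rintro ⟨⟨h₀, hstep, hzero⟩, h₂⟩
    have h₁ : a 1 = 1 := by simpa [h₀] using hstep 0 (by omega)
    exact ⟨h₁, h₂, fun i _ hi => hstep i hi, h₀, hzero⟩

lemma B_succ_eq_sub {n : ℕ} (hn : 1 ≤ n) (t : ℕ) :
    (B n (t + 1) : ℤ)
      = (boundedWalks (2 * n) (2 * n) 0).ncard - (boundedWalks t (2 * n) 0).ncard := by
  have hsub : boundedWalks t (2 * n) 0 ⊆ boundedWalks (2 * n) (2 * n) 0 :=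
    fun a ⟨hw, h₀, _⟩ => ⟨hw, h₀, hw.le_length⟩
  have hB : {a | IsDyckSeq n a ∧ ∃ i, t + 1 ≤ a i}
      = boundedWalks (2 * n) (2 * n) 0 \ boundedWalks t (2 * n) 0 := by
    ext a
    simp only [Set.mem_ofPred_eq, Set.mem_sdiff, boundedWalks, isDyckSeq_iff hn,
      Nat.cast_eq_zero, not_and, not_forall, not_le]
    constructor
    · rintro ⟨⟨hw, h₀⟩, i, hi⟩
      exact ⟨⟨hw, h₀, hw.le_length⟩, fun _ _ => ⟨i, hi⟩⟩
    · rintro ⟨⟨hw, h₀, -⟩, h⟩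
      exact ⟨⟨hw, h₀⟩, h hw h₀⟩
  have := Set.ncard_sdiff_add_ncard_of_subset hsub (boundedWalks_finite ..)
  have hcard : Nat.card {a // IsDyckSeq n a ∧ ∃ i, t + 1 ≤ a i} = _ :=
    Nat.card_coe_set_eq {a | IsDyckSeq n a ∧ ∃ i, t + 1 ≤ a i}
  rw [B, if_neg (by omega), hcard, hB]
  omega

lemma stripWalkCount_apply_zero_eq_add_sum (n t : ℕ) :
    stripWalkCount t (2 * n) 0 = reflectedWalkCount (2 * n) 0
      + ∑ j ∈ Finset.Icc 1 n, (reflectedWalkCount (2 * n) (2 * (j * (t + 2)))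
        + reflectedWalkCount (2 * n) (-(2 * (j * (t + 2))))) := by
  rw [stripWalkCount, periodize, finsum_int_eq_add_sum_Icc (N := n)]
  · simp only [zero_add, zero_mul, neg_mul]
    congr 1
    exact Finset.sum_congr rfl fun j _ => by ring_nf
  · intro j hj
    rw [Set.mem_Icc]
    by_contra hjn
    refine hj ?_
    dsimp only
    have : ((n : ℤ) + 1) * 4 ≤ |j * (2 * (t + 2))| := by
      rw [abs_mul, abs_of_pos (by positivity : (0 : ℤ) < 2 * (t + 2))]
      exact mul_le_mul (by rw [le_abs]; omega) (by omega) (by norm_num) (abs_nonneg j)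
    rw [le_abs] at this
    rw [reflectedWalkCount, walkCount_eq_zero, walkCount_eq_zero, sub_zero] <;> rw [lt_abs] <;>
      push_cast <;> omega

theorem stmt10 (n k : ℕ) (hn : 1 ≤ n) (hk : 1 ≤ k) :
    (B n k : ℤ) = ∑ j ∈ Finset.Icc 1 n,
      ((chooseZ (2*n) ((n : ℤ) + 1 - j*(k+1)) : ℤ)
        - 2 * chooseZ (2*n) ((n : ℤ) - j*(k+1))
        + chooseZ (2*n) ((n : ℤ) - 1 - j*(k+1))) := by
  obtain ⟨t, rfl⟩ : ∃ t, k = t + 1 := ⟨k - 1, by omega⟩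
  rw [show ((t + 1 : ℕ) : ℤ) + 1 = t + 2 by push_cast; ring, B_succ_eq_sub hn,
    ncard_boundedWalks_eq_stripWalkCount _ _ le_rfl (by positivity),
    ncard_boundedWalks_eq_stripWalkCount _ _ le_rfl (by positivity),
    stripWalkCount_apply_zero_of_le (by omega), stripWalkCount_apply_zero_eq_add_sum,
    sub_add_cancel_left, ← Finset.sum_neg_distrib]
  refine Finset.sum_congr rfl fun j _ => ?_
  rw [reflectedWalkCount_add_neg]
  ring
end

section
/- For every fixed k ≥ 1, the probability P_{n,k} = B_{n,k}/C_n that a uniformly random Dyck path of semilength n has height at least k tends to 1 as n → ∞. -/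
open Finset Real Filter

/-!
Dyck sequences of semilength `n` are the height profiles of Dyck words, so there are `catalan n`
of them and `B n (t + 1) = catalan n - A n t`. A path of height at most `t` never makes `t + 1`
consecutive up steps, so each of the `q = ⌊2n / (t + 1)⌋` aligned blocks of `t + 1` steps has
at most `2 ^ (t + 1) - 1` possible shapes, giving `A n t ≤ (1 - 2 ^ (-(t + 1))) ^ q * 4 ^ n`.
As `catalan n ≥ 4 ^ n / ((2n + 1)(n + 1))` is only polynomially smaller than `4 ^ n`,
`A n t / catalan n → 0`.
-/

open DyckStep Topology

def stepWord (n : ℕ) (a : ℕ → ℕ) : List DyckStep :=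
  List.ofFn fun j : Fin (2 * n) => if a (j + 1) = a j + 1 then U else D

lemma length_stepWord (n : ℕ) (a : ℕ → ℕ) : (stepWord n a).length = 2 * n := by
  simp [stepWord]

lemma getElem_stepWord {n : ℕ} {a : ℕ → ℕ} {j : ℕ} (hj : j < (stepWord n a).length) :
    (stepWord n a)[j] = if a (j + 1) = a j + 1 then U else D := by
  simp [stepWord]

lemma List.count_take_add_one {α : Type*} [DecidableEq α] (l : List α) {i : ℕ}
    (hi : i < l.length) (s : α) :
    (l.take (i + 1)).count s = (l.take i).count s + if l[i] = s then 1 else 0 := by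
  rw [List.take_add_one, List.getElem?_eq_getElem hi, Option.toList_some, List.count_append,
    List.count_singleton]
  simp only [beq_iff_eq]

namespace DyckWord

variable (p : DyckWord)

def height (i : ℕ) : ℕ := (p.toList.take i).count U - (p.toList.take i).count D

lemma height_zero : p.height 0 = 0 := by simp [height]

lemma height_of_length_le {i : ℕ} (hi : p.toList.length ≤ i) : p.height i = 0 := by
  rw [height, List.take_of_length_le hi, p.count_U_eq_count_D, Nat.sub_self]

variable {p} {i : ℕ}

lemma height_succ_of_getElem_eq_U (hi : i < p.toList.length) (hU : p.toList[i] = U) :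
    p.height (i + 1) = p.height i + 1 := by
  have := p.count_D_le_count_U i
  simp only [height, List.count_take_add_one _ hi, hU, if_true, reduceCtorEq, if_false]
  omega

lemma height_eq_succ_of_getElem_eq_D (hi : i < p.toList.length) (hD : p.toList[i] = D) :
    p.height i = p.height (i + 1) + 1 := by
  have := p.count_D_le_count_U (i + 1)
  simp only [height, List.count_take_add_one _ hi, hD, if_true, reduceCtorEq, if_false] at this ⊢
  omega

lemma height_one (hp : p ≠ 0) : p.height 1 = 1 := by
  have hlen : 0 < p.toList.length := List.length_pos_iff.mpr (toList_ne_nil.mpr hp)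
  have hU : p.toList[0] = U := by
    rw [← List.head_eq_getElem (toList_ne_nil.mpr hp)]
    exact p.head_eq_U _
  rw [height_succ_of_getElem_eq_U hlen hU, height_zero]

lemma isDyckSeq_height {n : ℕ} (hn : n ≠ 0) (hp : p.semilength = n) : IsDyckSeq n p.height := by
  have hlen : p.toList.length = 2 * n := by rw [← p.two_mul_semilength_eq_length, hp]
  have hp0 : p ≠ 0 := by
    rintro rfl
    exact hn (hp ▸ rfl)
  refine ⟨height_one hp0, p.height_of_length_le hlen.le, fun i _ hi => ?_, p.height_zero,
    fun i hi => p.height_of_length_le (by omega)⟩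
  rcases (p.toList[i]'(by omega)).dichotomy with hU | hD
  · exact .inl (height_succ_of_getElem_eq_U _ hU)
  · exact .inr (height_eq_succ_of_getElem_eq_D _ hD)

lemma stepWord_height {n : ℕ} (hp : p.semilength = n) : stepWord n p.height = p.toList := by
  have hlen : p.toList.length = 2 * n := by rw [← p.two_mul_semilength_eq_length, hp]
  refine List.ext_getElem (by rw [length_stepWord, hlen]) fun j hj hj' => ?_
  rw [getElem_stepWord]
  rcases (p.toList[j]).dichotomy with hU | hD
  · rw [hU, if_pos (height_succ_of_getElem_eq_U hj' hU)]
  · have := height_eq_succ_of_getElem_eq_D hj' hD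
    rw [hD, if_neg (by omega)]

end DyckWord

namespace IsDyckSeq

variable {n : ℕ} {a b : ℕ → ℕ}

lemma step (h : IsDyckSeq n a) {i : ℕ} (hi : i < 2 * n) :
    a (i + 1) = a i + 1 ∨ a i = a (i + 1) + 1 := by
  rcases Nat.eq_zero_or_pos i with rfl | hpos
  · exact .inl (by rw [h.1, h.2.2.2.1])
  · exact h.2.2.1 i hpos hi

lemma eq_of_upSteps_eq (ha : IsDyckSeq n a) (hb : IsDyckSeq n b)
    (h : ∀ i < 2 * n, (a (i + 1) = a i + 1 ↔ b (i + 1) = b i + 1)) : a = b := by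
  have agree : ∀ i ≤ 2 * n, a i = b i := by
    intro i hi
    induction i with
    | zero => rw [ha.2.2.2.1, hb.2.2.2.1]
    | succ i ih =>
      have := ih (by omega)
      have := h i hi
      rcases ha.step hi, hb.step hi with ⟨_ | _, _ | _⟩ <;> omega
  funext i
  rcases le_or_gt i (2 * n) with hi | hi
  · exact agree i hi
  · rw [ha.2.2.2.2 i hi, hb.2.2.2.2 i hi]

lemma count_take_stepWord_of_le (h : IsDyckSeq n a) {i : ℕ} (hi : i ≤ 2 * n) :
    ((stepWord n a).take i).count U = ((stepWord n a).take i).count D + a i := by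
  induction i with
  | zero => simp [h.2.2.2.1]
  | succ i ih =>
    have hlen : i < (stepWord n a).length := by rw [length_stepWord]; omega
    rw [List.count_take_add_one _ hlen, List.count_take_add_one _ hlen, getElem_stepWord,
      ih (by omega)]
    rcases h.step (i := i) (by omega) with up | down
    · simp only [if_pos up, if_true, reduceCtorEq, if_false]
      omega
    · simp only [if_neg (show a (i + 1) ≠ a i + 1 by omega), if_true, reduceCtorEq, if_false]
      omega

lemma count_take_stepWord (h : IsDyckSeq n a) (i : ℕ) :
    ((stepWord n a).take i).count U = ((stepWord n a).take i).count D + a i := by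
  rcases le_or_gt i (2 * n) with hi | hi
  · exact h.count_take_stepWord_of_le hi
  · have whole := h.count_take_stepWord_of_le le_rfl
    rw [List.take_of_length_le (length_stepWord n a).le, h.2.1] at whole
    rwa [List.take_of_length_le (by rw [length_stepWord]; omega), h.2.2.2.2 i hi]

def toDyckWord (h : IsDyckSeq n a) : DyckWord where
  toList := stepWord n a
  count_U_eq_count_D := by
    simpa [List.take_of_length_le (length_stepWord n a).le, h.2.1]
      using h.count_take_stepWord (2 * n)
  count_D_le_count_U i := by
    rw [h.count_take_stepWord i]
    omega

lemma semilength_toDyckWord (h : IsDyckSeq n a) : h.toDyckWord.semilength = n := by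
  have := h.toDyckWord.two_mul_semilength_eq_length
  rw [show h.toDyckWord.toList = stepWord n a from rfl, length_stepWord] at this
  omega

lemma height_toDyckWord (h : IsDyckSeq n a) :
    h.toDyckWord.height = a := by
  funext i
  have := h.count_take_stepWord i
  simp only [DyckWord.height, toDyckWord]
  omega

end IsDyckSeq

def dyckSeqEquiv {n : ℕ} (hn : n ≠ 0) :
    {a : ℕ → ℕ // IsDyckSeq n a} ≃ {p : DyckWord // p.semilength = n} where
  toFun a := ⟨a.2.toDyckWord, a.2.semilength_toDyckWord⟩
  invFun p := ⟨p.1.height, p.1.isDyckSeq_height hn p.2⟩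
  left_inv a := Subtype.ext a.2.height_toDyckWord
  right_inv p := Subtype.ext (DyckWord.ext (p.1.stepWord_height p.2))

lemma card_dyckSeq {n : ℕ} (hn : n ≠ 0) :
    Nat.card {a : ℕ → ℕ // IsDyckSeq n a} = catalan n := by
  rw [Nat.card_congr (dyckSeqEquiv hn), Nat.card_eq_fintype_card,
    DyckWord.card_dyckWord_semilength_eq_catalan]

lemma card_le_of_injective_of_blocks_ne_true {α : Type*} (w : α → ℕ → Bool) {m q r : ℕ}
    (hm : 0 < m) (hinj : ∀ x y, (∀ i < m * q + r, w x i = w y i) → x = y)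
    (hblock : ∀ x, ∀ b < q, ∃ j < m, w x (b * m + j) = false) :
    Nat.card α ≤ (2 ^ m - 1) ^ q * 2 ^ r := by
  classical
  let blocks (x : α) :
      (Fin q → {v : Fin m → Bool // v ≠ fun _ => true}) × (Fin r → Bool) :=
    (fun b => ⟨fun j => w x (b * m + j), fun hv => by
        obtain ⟨j, hj, hfalse⟩ := hblock x b b.2
        simpa [hfalse] using congrFun hv ⟨j, hj⟩⟩,
      fun j => w x (m * q + j))
  have blocks_injective : Function.Injective blocks := by
    intro x y hxy
    simp only [blocks, Prod.mk.injEq, funext_iff, Subtype.ext_iff] at hxy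
    refine hinj x y fun i hi => ?_
    rcases lt_or_ge i (m * q) with hlt | hge
    · have := hxy.1 ⟨i / m, Nat.div_lt_of_lt_mul hlt⟩ ⟨i % m, Nat.mod_lt i hm⟩
      rwa [Nat.div_add_mod'] at this
    · have := hxy.2 ⟨i - m * q, by omega⟩
      rwa [Nat.add_sub_cancel' hge] at this
  refine (Nat.card_le_card_of_injective blocks blocks_injective).trans_eq ?_
  simp [Nat.card_eq_fintype_card, Fintype.card_subtype_compl]

lemma add_eq_of_up_run {a : ℕ → ℕ} {s m : ℕ}
    (h : ∀ j < m, a (s + j + 1) = a (s + j) + 1) :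
    a (s + m) = a s + m := by
  induction m with
  | zero => rfl
  | succ m ih =>
    rw [← Nat.add_assoc, h m (by omega), ih fun j hj => h j (by omega), Nat.add_assoc]

/-- A path of height at most `t` has a down step in every block of `t + 1` steps. -/
lemma card_dyckSeq_height_le (n t : ℕ) :
    Nat.card {a : ℕ → ℕ // IsDyckSeq n a ∧ ∀ i, a i ≤ t} ≤
      (2 ^ (t + 1) - 1) ^ (2 * n / (t + 1)) * 2 ^ (2 * n % (t + 1)) := by
  refine card_le_of_injective_of_blocks_ne_true (fun a i => decide (a.1 (i + 1) = a.1 i + 1))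
    t.succ_pos (fun a b h => Subtype.ext (a.2.1.eq_of_upSteps_eq b.2.1 fun i hi => ?_))
    fun a b hb => ?_
  · simpa using h i (by rwa [Nat.div_add_mod])
  · by_contra! up
    have rise := add_eq_of_up_run (a := a.1) (s := b * (t + 1)) (m := t + 1) (by simpa using up)
    have := a.2.2 (b * (t + 1) + (t + 1))
    omega

lemma card_and_add_card_and_not {α : Type*} (p q : α → Prop) [Finite {x // p x}] :
    Nat.card {x // p x ∧ q x} + Nat.card {x // p x ∧ ¬ q x} = Nat.card {x // p x} := by
  have := Set.ncard_inter_add_ncard_sdiff_eq_ncard {x | p x} {x | q x}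
    (Set.finite_coe_iff.mp ‹Finite {x // p x}›)
  rwa [← Nat.card_coe_set_eq, ← Nat.card_coe_set_eq, ← Nat.card_coe_set_eq] at this

lemma B_succ_add_A {n : ℕ} (hn : n ≠ 0) (t : ℕ) : B n (t + 1) + A n t = catalan n := by
  have : Finite {a : ℕ → ℕ // IsDyckSeq n a} := .of_equiv _ (dyckSeqEquiv hn).symm
  have height_le_iff (a : ℕ → ℕ) : (∀ i, a i ≤ t) ↔ ¬ ∃ i, t + 1 ≤ a i := by
    simp only [not_exists, not_le, Nat.lt_succ_iff]
  simp only [B, A, if_neg hn, height_le_iff]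
  rw [card_and_add_card_and_not, card_dyckSeq hn]

lemma C_eq_catalan (n : ℕ) : C n = catalan n := by
  rw [catalan_eq_centralBinom_div]
  rfl

lemma four_pow_le_catalan (n : ℕ) : 4 ^ n ≤ (2 * n + 1) * (n + 1) * catalan n := by
  rw [Nat.mul_assoc, succ_mul_catalan_eq_centralBinom]
  exact Nat.four_pow_le_two_mul_add_one_mul_central_binom n

lemma catalan_pos (n : ℕ) : 0 < catalan n :=
  Nat.pos_of_ne_zero fun h => by simpa [h] using four_pow_le_catalan n

lemma A_div_C_le {n : ℕ} (hn : n ≠ 0) (t : ℕ) :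
    (A n t : ℝ) / C n ≤ ((t + 1 : ℝ) * ((2 * n / (t + 1) : ℕ) + 1)) ^ 2 *
      (((2 : ℝ) ^ (t + 1) - 1) / 2 ^ (t + 1)) ^ (2 * n / (t + 1)) := by
  set m := t + 1
  set q := 2 * n / m
  set r := 2 * n % m
  set ρ : ℝ := (2 ^ m - 1) / 2 ^ m
  have hρ : 0 ≤ ρ := div_nonneg (sub_nonneg.2 (one_le_pow₀ one_le_two)) (by positivity)
  have hdiv : m * q + r = 2 * n := Nat.div_add_mod (2 * n) m
  have hA : A n t ≤ (2 ^ m - 1) ^ q * 2 ^ r := by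
    simpa only [A, if_neg hn] using card_dyckSeq_height_le n t
  have hcatalan : 4 ^ n ≤ (m * (q + 1)) ^ 2 * catalan n := by
    have : 2 * n + 1 ≤ m * (q + 1) := by
      rw [Nat.mul_succ]
      have := Nat.mod_lt (2 * n) (show 0 < m by omega)
      omega
    calc 4 ^ n ≤ (2 * n + 1) * (n + 1) * catalan n := four_pow_le_catalan n
      _ ≤ (m * (q + 1)) ^ 2 * catalan n := by rw [sq]; gcongr; omega
  have hpow : (((2 ^ m - 1) ^ q * 2 ^ r : ℕ) : ℝ) = ρ ^ q * 4 ^ n := by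
    rw [show (4 : ℝ) ^ n = (2 ^ m) ^ q * 2 ^ r by
      rw [← pow_mul, ← pow_add, hdiv, pow_mul]; norm_num]
    push_cast [Nat.one_le_two_pow]
    rw [div_pow]
    field_simp
  rw [C_eq_catalan, div_le_iff₀ (by exact_mod_cast catalan_pos n)]
  calc (A n t : ℝ) ≤ ρ ^ q * 4 ^ n := by rw [← hpow]; exact_mod_cast hA
    _ ≤ ρ ^ q * ((m * (q + 1)) ^ 2 * catalan n) := by
        gcongr
        exact_mod_cast hcatalan
    _ = _ := by simp only [m]; push_cast; ring

lemma tendsto_const_mul_sq_succ_mul_pow {ρ : ℝ} (hρ₀ : 0 < ρ) (hρ₁ : ρ < 1) (c : ℝ) :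
    Tendsto (fun j : ℕ => (c * (j + 1)) ^ 2 * ρ ^ j) atTop (𝓝 0) := by
  have shifted := ((tendsto_pow_const_mul_const_pow_of_lt_one 2 hρ₀.le hρ₁).comp
    (tendsto_add_atTop_nat 1)).const_mul (c ^ 2 / ρ)
  rw [mul_zero] at shifted
  refine shifted.congr fun j => ?_
  simp only [Function.comp_apply, Nat.cast_add, Nat.cast_one, pow_succ]
  field_simp

lemma tendsto_A_div_C (t : ℕ) : Tendsto (fun n => (A n t : ℝ) / C n) atTop (𝓝 0) := by
  have hρ₀ : (0 : ℝ) < (2 ^ (t + 1) - 1) / 2 ^ (t + 1) :=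
    div_pos (sub_pos.2 (one_lt_pow₀ one_lt_two t.succ_ne_zero)) (by positivity)
  have hρ₁ : ((2 : ℝ) ^ (t + 1) - 1) / 2 ^ (t + 1) < 1 := by
    rw [div_lt_one (by positivity)]
    linarith
  have blocks_tendsto : Tendsto (fun n => 2 * n / (t + 1)) atTop atTop :=
    (Nat.tendsto_div_const_atTop t.succ_ne_zero).comp
      (tendsto_id.const_mul_atTop' two_pos)
  refine tendsto_of_tendsto_of_tendsto_of_le_of_le' tendsto_const_nhds
    ((tendsto_const_mul_sq_succ_mul_pow hρ₀ hρ₁ (t + 1)).comp blocks_tendsto)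
    (.of_forall fun n => by positivity) ?_
  filter_upwards [eventually_ne_atTop 0] with n hn
  exact A_div_C_le hn t

/-- the probability of reaching height k tends to 1. -/
theorem stmt14 (k : ℕ) (hk : 1 ≤ k) :
    Filter.Tendsto (fun n : ℕ => (B n k : ℝ) / C n) Filter.atTop (nhds 1) := by
  obtain ⟨t, rfl⟩ := Nat.exists_eq_add_of_le' hk
  have complement := (tendsto_A_div_C t).const_sub 1
  rw [sub_zero] at complement
  refine complement.congr' ?_
  filter_upwards [eventually_ne_atTop 0] with n hn
  have hC : (C n : ℝ) = B n (t + 1) + A n t := by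
    rw [C_eq_catalan, ← B_succ_add_A hn]
    push_cast
    ring
  have hC₀ : (C n : ℝ) ≠ 0 := by
    rw [C_eq_catalan]
    exact_mod_cast (catalan_pos n).ne'
  field_simp
  linarith
end
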